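/- Let (θ_n)_{n≥1} be a summable family of nonnegative elements of E and let (ξ_n)_{n≥1} and (η_n)_{n≥1} be sequences in the closed unit ball of H. Then: (a) the family of operators (θ_n·(ξ_n⟨·,η_n⟩))_{n≥1}, where θ_n·(ξ_n⟨·,η_n⟩) denotes the operator ζ ↦ ξ_n·(⟨ζ,η_n⟩·θ_n), is summable in K(H) for the operator norm; let u denote its sum. (b) With e_i := (δ_{iλ}·p_i)_{λ∈I} ∈ H for each i ∈ I, the family (⟨u e_i, e_i⟩)_{i∈I} is summable in E and ∑_{i∈I} ⟨u e_i, e_i⟩ = ∑_{n≥1} θ_n·⟨ξ_n, η_n⟩. -/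

import Mathlib

open scoped ComplexOrder

noncomputable section

abbrev ell2 (I : Type*) : Type _ := lp (fun _ : I => ℂ) 2

/-- `n`-th singular value of an operator: distance to operators of rank `< n`. -/
def sval {F : Type*} [NormedAddCommGroup F] [InnerProductSpace ℂ F] (n : ℕ)
    (a : F →L[ℂ] F) : ℝ :=
  sInf {r : ℝ | ∃ b : F →L[ℂ] F,
    Module.rank ℂ (LinearMap.range (b : F →ₗ[ℂ] F)) < n ∧ r = ‖a - b‖}

/-- rank one operator `z ↦ ⟨z, y⟩ • x` (inner product linear in the first variable). -/
def rankOne {F : Type*} [NormedAddCommGroup F] [InnerProductSpace ℂ F] (x y : F) :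
    F →L[ℂ] F :=
  (ContinuousLinearMap.toSpanSingleton ℂ x).comp ((innerSL ℂ) y)

variable {T I : Type*} [TopologicalSpace T] [CompactSpace T] [T2Space T]

/-- membership in the Hilbert right `C(T,ℂ)`-module `H = ⊕_i p_i E`. -/
def MemH (p : I → C(T, ℂ)) (ξ : I → C(T, ℂ)) : Prop :=
  (∀ i, p i * ξ i = ξ i) ∧ Summable fun i => star (ξ i) * ξ i

/-- the `E`-valued inner product of `H`, `⟨ξ, η⟩ = ∑ i, η i * * ξ i`. -/
def hinner (ξ η : I → C(T, ℂ)) : C(T, ℂ) := ∑' i, star (η i) * ξ i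

/-- the norm of `H`. -/
def hnorm (ξ : I → C(T, ℂ)) : ℝ := Real.sqrt ‖hinner ξ ξ‖

/-- adjointable operators on `H`, i.e. the elements of `L_E(H)`. -/
structure Adjointable (p : I → C(T, ℂ)) where
  toFun : (I → C(T, ℂ)) → (I → C(T, ℂ))
  adj : (I → C(T, ℂ)) → (I → C(T, ℂ))
  mem' : ∀ ξ, MemH p ξ → MemH p (toFun ξ)
  adj_mem' : ∀ ξ, MemH p ξ → MemH p (adj ξ)
  map_add' : ∀ ξ η, MemH p ξ → MemH p η → toFun (ξ + η) = toFun ξ + toFun η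
  map_smul' : ∀ (x : C(T, ℂ)) ξ, MemH p ξ →
    toFun (fun i => ξ i * x) = fun i => toFun ξ i * x
  bound' : ∃ C : ℝ, ∀ ξ, MemH p ξ → hnorm (toFun ξ) ≤ C * hnorm ξ
  inner_adj' : ∀ ξ η, MemH p ξ → MemH p η → hinner (toFun ξ) η = hinner ξ (adj η)

/-- `a : ℓ²(I) → ℓ²(I)` represents `φ_t u := ψ_t ∘ u ∘ ψ`. -/
def Represents (p : I → C(T, ℂ)) (t : T)
    (u : (I → C(T, ℂ)) → (I → C(T, ℂ))) (a : ell2 I →L[ℂ] ell2 I) : Prop :=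
  ∀ ζ : ell2 I, ∀ i : I, (a ζ : ∀ _ : I, ℂ) i = u (fun j => ((ζ : ∀ _ : I, ℂ) j) • p j) i t

/-- membership in `K(H)`: uniform approximation, on the unit ball of `H`, by finite sums of
rank one module operators. -/
def CompactH (p : I → C(T, ℂ)) (u : (I → C(T, ℂ)) → (I → C(T, ℂ))) : Prop :=
  ∀ ε : ℝ, 0 < ε → ∃ (m : ℕ) (ξs ηs : Fin m → (I → C(T, ℂ))),
    (∀ k, MemH p (ξs k) ∧ MemH p (ηs k)) ∧
    ∀ ζ, MemH p ζ → hnorm ζ ≤ 1 →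
      hnorm (fun i => u ζ i - ∑ k, ξs k i * hinner ζ (ηs k)) ≤ ε

/-- `u ∈ L^p(E,H)`, expressed through a family `A` of representatives of the `φ_t u`:
the family `(θ_n(u)^p)ₙ` is summable in `E`. -/
def InLp {I : Type*} (pp : ℝ) (A : T → (ell2 I →L[ℂ] ell2 I)) : Prop :=
  ∃ Θ : ℕ → C(T, ℝ), (∀ n t, Θ n t = sval (n + 1) (A t) ^ pp) ∧ Summable Θ

/-- the norm `‖u‖_p = ‖∑ₙ θ_n(u)^p‖^(1/p)`. -/
def pnorm {I : Type*} (pp : ℝ) (A : T → (ell2 I →L[ℂ] ell2 I)) : ℝ :=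
  (⨆ t : T, ∑' n : ℕ, sval (n + 1) (A t) ^ pp) ^ (1 / pp)

/-- the operator norm of an element of `L_E(H)`. -/
def opNormH (p : I → C(T, ℂ)) (u : Adjointable p) : ℝ :=
  ⨆ ξ : {ξ : I → C(T, ℂ) // MemH p ξ ∧ hnorm ξ ≤ 1}, hnorm (u.toFun ξ)

end

/-!
Everything is checked pointwise in `t ∈ T`, where an element of `H` becomes a vector of `ℓ²(I)`
and `⟨·,·⟩` the inner product of `ℓ²(I)`. Since `θₙ ≥ 0`, `∑_{n ∈ G} |θₙ(t)| ≤ ‖∑_{n ∈ G} θₙ‖`,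
so a family dominated pointwise by `θ` is summable in `E`.

(a) The tail `∑_{n ∉ F} θₙ ⟨ζ, ηₙ⟩ ξₙ` of the series is, at each `t`, a series of vectors of
`ℓ²`-norm at most `θₙ(t)`; by the triangle inequality in `ℓ²` its norm is bounded by the tail of
`∑ θₙ`, uniformly in `t` and in `ζ`.

(b) `⟨u eᵢ, eᵢ⟩ = ∑ₙ θₙ ηₙᵢ* ξₙᵢ`. The double family `θₙ ηₙᵢ* ξₙᵢ` is summable over `ℕ × I`,
because by Cauchy–Schwarz every finite partial sum of a row `(ηₙᵢ* ξₙᵢ)ᵢ` has norm at most `1`;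
summing it first over `i` and first over `n` gives the two sides of (b).
-/

lemma summable_ite_fst_mem {α β M : Type*} [DecidableEq α] [AddCommMonoid M]
    [TopologicalSpace M] [ContinuousAdd M] {g : α × β → M}
    (hg : ∀ n, Summable fun b => g (n, b)) (F : Finset α) :
    Summable fun x : α × β => if x.1 ∈ F then g x else 0 := by
  have h : (fun x : α × β => if x.1 ∈ F then g x else 0)
      = fun x => ∑ n ∈ F, if n = x.1 then g x else 0 := by
    ext1 x
    rw [Finset.sum_ite_eq']
  rw [h]
  refine summable_sum fun n _ => ((Prod.mk_right_injective n).summable_iff ?_).1 ?_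
  · rintro ⟨m, b⟩ hx
    rw [if_neg]
    rintro rfl
    exact hx ⟨b, rfl⟩
  · simpa [Function.comp_def] using hg n

section ContinuousFunctions

variable {T : Type*} [TopologicalSpace T] {α : Type*}

lemma star_mul_self_apply (f : C(T, ℂ)) (t : T) : (star f * f) t = ((‖f t‖ ^ 2 : ℝ) : ℂ) := by
  simp [Complex.conj_mul']

lemma isSelfAdjoint_of_forall_eq_zero_or_one {f : C(T, ℂ)}
    (hf : ∀ t, f t = 0 ∨ f t = 1) : IsSelfAdjoint f :=
  ContinuousMap.ext fun t => by rcases hf t with h | h <;> simp [h]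

lemma hasSum_norm_apply {b : α → C(T, ℂ)} (hb0 : ∀ a t, 0 ≤ b a t) (hb : Summable b) (t : T) :
    HasSum (fun a => ‖b a t‖) ‖(∑' a, b a) t‖ := by
  have h := ContinuousMap.hasSum_apply hb.hasSum t
  rw [← Complex.norm_of_nonneg' (h.nonneg (hb0 · t))] at h
  rw [show (fun a => b a t) = fun a => ((‖b a t‖ : ℝ) : ℂ) from
    funext fun a => (Complex.norm_of_nonneg' (hb0 a t)).symm] at h
  exact Complex.hasSum_ofReal.1 h

variable [CompactSpace T]

lemma sum_norm_apply_le_norm_sum {b : α → C(T, ℂ)} (hb0 : ∀ a t, 0 ≤ b a t) (G : Finset α)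
    (t : T) : ∑ a ∈ G, ‖b a t‖ ≤ ‖∑ a ∈ G, b a‖ := by
  have h : ((∑ a ∈ G, ‖b a t‖ : ℝ) : ℂ) = (∑ a ∈ G, b a) t := by
    push_cast
    simp only [Complex.norm_of_nonneg' (hb0 _ t), ContinuousMap.sum_apply]
  calc ∑ a ∈ G, ‖b a t‖ = ‖(∑ a ∈ G, b a) t‖ := by
        rw [← h, Complex.norm_real, Real.norm_of_nonneg (by positivity)]
    _ ≤ ‖∑ a ∈ G, b a‖ := ContinuousMap.norm_coe_le_norm _ t

lemma norm_sum_le_norm_sum_of_norm_apply_le {f b : α → C(T, ℂ)} (hb0 : ∀ a t, 0 ≤ b a t)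
    (hfb : ∀ a t, ‖f a t‖ ≤ ‖b a t‖) (G : Finset α) : ‖∑ a ∈ G, f a‖ ≤ ‖∑ a ∈ G, b a‖ :=
  (ContinuousMap.norm_le _ (norm_nonneg _)).2 fun t => calc
    ‖(∑ a ∈ G, f a) t‖ ≤ ∑ a ∈ G, ‖f a t‖ := by
        rw [ContinuousMap.sum_apply]; exact norm_sum_le _ _
    _ ≤ ∑ a ∈ G, ‖b a t‖ := Finset.sum_le_sum fun a _ => hfb a t
    _ ≤ ‖∑ a ∈ G, b a‖ := sum_norm_apply_le_norm_sum hb0 G t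

lemma summable_of_norm_apply_le {f b : α → C(T, ℂ)} (hb0 : ∀ a t, 0 ≤ b a t) (hb : Summable b)
    (hfb : ∀ a t, ‖f a t‖ ≤ ‖b a t‖) : Summable f := by
  rw [summable_iff_vanishing_norm] at hb ⊢
  intro ε hε
  obtain ⟨s, hs⟩ := hb ε hε
  exact ⟨s, fun G hG => (norm_sum_le_norm_sum_of_norm_apply_le hb0 hfb G).trans_lt (hs G hG)⟩

lemma norm_sum_mul_le_norm_sum_fst [DecidableEq α] {β : Type*} {θ : α → C(T, ℂ)}
    (hθ0 : ∀ n t, 0 ≤ θ n t) {a : α → β → C(T, ℂ)}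
    (ha1 : ∀ n (G : Finset β), ‖∑ b ∈ G, a n b‖ ≤ 1) (G : Finset (α × β)) :
    ‖∑ x ∈ G, θ x.1 * a x.1 x.2‖ ≤ ‖∑ n ∈ G.image Prod.fst, θ n‖ := by
  set fiber : α → Finset β := fun n => G.preimage (Prod.mk n) (Prod.mk_right_injective n).injOn
  rw [Finset.sum_finset_product G (G.image Prod.fst) fiber
    (fun x => by simpa [fiber] using fun hx => ⟨x.2, hx⟩)]
  simp only [← Finset.mul_sum]
  refine norm_sum_le_norm_sum_of_norm_apply_le hθ0 (fun n t => ?_) _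
  rw [ContinuousMap.mul_apply, norm_mul]
  exact mul_le_of_le_one_right (norm_nonneg _)
    ((ContinuousMap.norm_coe_le_norm _ t).trans (ha1 n _))

/-- Split the family into the rows `n ∈ F₀`, finitely many summable families, and the remaining
rows, whose finite partial sums are controlled by the tail of `∑ θ`. -/
theorem summable_mul_prod {β : Type*} {θ : α → C(T, ℂ)} (hθ0 : ∀ n t, 0 ≤ θ n t)
    (hθ : Summable θ) {a : α → β → C(T, ℂ)} (ha : ∀ n, Summable (a n))
    (ha1 : ∀ n (G : Finset β), ‖∑ b ∈ G, a n b‖ ≤ 1) :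
    Summable fun x : α × β => θ x.1 * a x.1 x.2 := by
  classical
  rw [summable_iff_vanishing_norm]
  intro ε hε
  obtain ⟨F₀, hF₀⟩ := summable_iff_vanishing_norm.1 hθ (ε / 2) (half_pos hε)
  have hhead := summable_ite_fst_mem (g := fun x => θ x.1 * a x.1 x.2)
    (fun n => (ha n).mul_left (θ n)) F₀
  obtain ⟨K, hK⟩ := summable_iff_vanishing_norm.1 hhead (ε / 2) (half_pos hε)
  refine ⟨K, fun G hG => ?_⟩
  have htail : ‖∑ x ∈ G with x.1 ∉ F₀, θ x.1 * a x.1 x.2‖ < ε / 2 := by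
    refine (norm_sum_mul_le_norm_sum_fst hθ0 ha1 _).trans_lt (hF₀ _ ?_)
    simp only [Finset.disjoint_left, Finset.mem_image, Finset.mem_filter]
    rintro n ⟨x, ⟨-, hx⟩, rfl⟩
    exact hx
  calc ‖∑ x ∈ G, θ x.1 * a x.1 x.2‖
      = ‖∑ x ∈ G, (if x.1 ∈ F₀ then θ x.1 * a x.1 x.2 else 0)
          + ∑ x ∈ G with x.1 ∉ F₀, θ x.1 * a x.1 x.2‖ := by
        rw [Finset.sum_filter, ← Finset.sum_add_distrib]
        congr 1
        exact Finset.sum_congr rfl fun x _ => by split_ifs <;> simp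
    _ < ε := (norm_add_le _ _).trans_lt (by linarith [hK G hG])

end ContinuousFunctions

lemma sum_norm_tsum_sq_le {α ι : Type*} [Fintype ι] {x : α → ι → ℂ} {b : α → ℝ}
    (hb0 : ∀ a, 0 ≤ b a) (hb : Summable b) (hxb : ∀ a, ∑ i, ‖x a i‖ ^ 2 ≤ b a ^ 2) :
    ∑ i, ‖∑' a, x a i‖ ^ 2 ≤ (∑' a, b a) ^ 2 := by
  set v : α → EuclideanSpace ℂ ι := fun a => WithLp.toLp 2 (x a)
  have hv : ∀ a, ‖v a‖ ≤ b a := fun a => by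
    rw [EuclideanSpace.norm_eq, Real.sqrt_le_left (hb0 a)]
    exact hxb a
  have hsv : Summable v := .of_norm_bounded hb hv
  have hcoord : ∀ i, (∑' a, v a) i = ∑' a, x a i := fun i =>
    (EuclideanSpace.proj (𝕜 := ℂ) i).map_tsum hsv
  calc ∑ i, ‖∑' a, x a i‖ ^ 2 = ‖∑' a, v a‖ ^ 2 := by
        rw [EuclideanSpace.norm_eq, Real.sq_sqrt (by positivity)]
        simp only [hcoord]
    _ ≤ (∑' a, b a) ^ 2 := by
        gcongr
        exact (norm_tsum_le_tsum_norm (hb.of_nonneg_of_le (fun _ => norm_nonneg _) hv)).trans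
          (Summable.tsum_le_tsum hv (hb.of_nonneg_of_le (fun _ => norm_nonneg _) hv) hb)

section HilbertModule

variable {T I : Type*} [TopologicalSpace T]

lemma hasSum_norm_sq_apply {ζ : I → C(T, ℂ)} (hζ : Summable fun i => star (ζ i) * ζ i) (t : T) :
    HasSum (fun i => ‖ζ i t‖ ^ 2) ‖hinner ζ ζ t‖ := by
  have h0 : ∀ i t, 0 ≤ (star (ζ i) * ζ i) t := fun i t => by
    rw [star_mul_self_apply]; exact Complex.zero_le_real.2 (sq_nonneg _)
  have h := hasSum_norm_apply h0 hζ t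
  simp only [star_mul_self_apply, Complex.norm_real, norm_pow, norm_norm] at h
  exact h

lemma hinner_single_left [DecidableEq I] (i : I) (x : C(T, ℂ)) (η : I → C(T, ℂ)) :
    hinner (fun l => if l = i then x else 0) η = star (η i) * x := by
  rw [hinner, tsum_eq_single i fun l hl => by simp [hl]]
  simp

lemma hinner_single_right [DecidableEq I] (i : I) (x : C(T, ℂ)) (ξ : I → C(T, ℂ)) :
    hinner ξ (fun l => if l = i then x else 0) = star x * ξ i := by
  rw [hinner, tsum_eq_single i fun l hl => by simp [hl]]
  simp

variable [CompactSpace T]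

lemma hnorm_nonneg (ζ : I → C(T, ℂ)) : 0 ≤ hnorm ζ := Real.sqrt_nonneg _

lemma sum_norm_sq_apply_le_hnorm_sq {ζ : I → C(T, ℂ)} (hζ : Summable fun i => star (ζ i) * ζ i)
    (G : Finset I) (t : T) : ∑ i ∈ G, ‖ζ i t‖ ^ 2 ≤ hnorm ζ ^ 2 :=
  calc ∑ i ∈ G, ‖ζ i t‖ ^ 2 ≤ ‖hinner ζ ζ t‖ :=
        sum_le_hasSum G (fun _ _ => by positivity) (hasSum_norm_sq_apply hζ t)
    _ ≤ ‖hinner ζ ζ‖ := ContinuousMap.norm_coe_le_norm _ t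
    _ = hnorm ζ ^ 2 := by rw [hnorm, Real.sq_sqrt (norm_nonneg _)]

lemma hnorm_le_of_sum_norm_sq_apply_le {ζ : I → C(T, ℂ)} {r : ℝ} (hr : 0 ≤ r)
    (h : ∀ t (G : Finset I), ∑ i ∈ G, ‖ζ i t‖ ^ 2 ≤ r ^ 2) : hnorm ζ ≤ r := by
  rw [hnorm, Real.sqrt_le_left hr, ContinuousMap.norm_le _ (by positivity)]
  intro t
  by_cases hζ : Summable fun i => star (ζ i) * ζ i
  · exact hasSum_le_of_sum_le (hasSum_norm_sq_apply hζ t) (h t)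
  · -- junk value: `hinner ζ ζ = 0` when the family is not summable
    rw [hinner, tsum_eq_zero_of_not_summable hζ]
    simpa using sq_nonneg r

lemma norm_sum_star_mul_le {ζ η : I → C(T, ℂ)} (hζ : Summable fun i => star (ζ i) * ζ i)
    (hη : Summable fun i => star (η i) * η i) (G : Finset I) :
    ‖∑ i ∈ G, star (η i) * ζ i‖ ≤ hnorm ζ * hnorm η := by
  have hsqrt : ∀ {ξ : I → C(T, ℂ)}, (Summable fun i => star (ξ i) * ξ i) → ∀ t,
      √(∑ i ∈ G, ‖ξ i t‖ ^ 2) ≤ hnorm ξ := fun hξ t =>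
    (Real.sqrt_le_left (Real.sqrt_nonneg _)).2 (sum_norm_sq_apply_le_hnorm_sq hξ G t)
  refine (ContinuousMap.norm_le _ (mul_nonneg (hnorm_nonneg _) (hnorm_nonneg _))).2 fun t => ?_
  calc ‖(∑ i ∈ G, star (η i) * ζ i) t‖ ≤ ∑ i ∈ G, ‖ζ i t‖ * ‖η i t‖ := by
        rw [ContinuousMap.sum_apply]
        refine (norm_sum_le _ _).trans_eq (Finset.sum_congr rfl fun i _ => ?_)
        simp [mul_comm]
    _ ≤ √(∑ i ∈ G, ‖ζ i t‖ ^ 2) * √(∑ i ∈ G, ‖η i t‖ ^ 2) := Real.sum_mul_le_sqrt_mul_sqrt _ _ _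
    _ ≤ hnorm ζ * hnorm η := mul_le_mul (hsqrt hζ t) (hsqrt hη t) (Real.sqrt_nonneg _)
        (hnorm_nonneg _)

lemma summable_star_mul {ζ η : I → C(T, ℂ)} (hζ : Summable fun i => star (ζ i) * ζ i)
    (hη : Summable fun i => star (η i) * η i) : Summable fun i => star (η i) * ζ i := by
  refine summable_of_norm_apply_le (fun i t => ?_) (hζ.add hη) fun i t => ?_
  · rw [ContinuousMap.add_apply, star_mul_self_apply, star_mul_self_apply, ← Complex.ofReal_add]
    exact Complex.zero_le_real.2 (by positivity)
  · rw [ContinuousMap.add_apply, star_mul_self_apply, star_mul_self_apply, ← Complex.ofReal_add,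
      Complex.norm_real, Real.norm_of_nonneg (by positivity), ContinuousMap.mul_apply,
      ContinuousMap.star_apply, norm_mul, norm_star]
    nlinarith [sq_nonneg (‖η i t‖ - ‖ζ i t‖), norm_nonneg (η i t), norm_nonneg (ζ i t)]

lemma norm_hinner_le {ζ η : I → C(T, ℂ)} (hζ : Summable fun i => star (ζ i) * ζ i)
    (hη : Summable fun i => star (η i) * η i) : ‖hinner ζ η‖ ≤ hnorm ζ * hnorm η :=
  le_of_tendsto' (summable_star_mul hζ hη).hasSum.norm (norm_sum_star_mul_le hζ hη)

lemma summable_apply_of_sum_norm_sq_apply_le {α : Type*} {f : α → I → C(T, ℂ)}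
    {b : α → C(T, ℂ)} (hb0 : ∀ a t, 0 ≤ b a t) (hb : Summable b)
    (hfb : ∀ a t (G : Finset I), ∑ i ∈ G, ‖f a i t‖ ^ 2 ≤ ‖b a t‖ ^ 2) (i : I) :
    Summable fun a => f a i := by
  classical
  refine summable_of_norm_apply_le hb0 hb fun a t => ?_
  have h := hfb a t {i}
  rw [Finset.sum_singleton] at h
  exact (pow_le_pow_iff_left₀ (norm_nonneg _) (norm_nonneg _) two_ne_zero).1 h

lemma hnorm_tsum_le {α : Type*} {f : α → I → C(T, ℂ)} {b : α → C(T, ℂ)}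
    (hb0 : ∀ a t, 0 ≤ b a t) (hb : Summable b)
    (hfb : ∀ a t (G : Finset I), ∑ i ∈ G, ‖f a i t‖ ^ 2 ≤ ‖b a t‖ ^ 2) :
    hnorm (fun i => ∑' a, f a i) ≤ ‖∑' a, b a‖ := by
  have hf := summable_apply_of_sum_norm_sq_apply_le hb0 hb hfb
  refine hnorm_le_of_sum_norm_sq_apply_le (norm_nonneg _) fun t G => ?_
  have hbt := hasSum_norm_apply hb0 hb t
  calc ∑ i ∈ G, ‖(∑' a, f a i) t‖ ^ 2 = ∑ i : G, ‖∑' a, f a i t‖ ^ 2 := by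
        rw [← Finset.sum_coe_sort]
        simp only [ContinuousMap.tsum_apply (hf _)]
    _ ≤ (∑' a, ‖b a t‖) ^ 2 :=
        sum_norm_tsum_sq_le (fun a => norm_nonneg _) hbt.summable fun a => by
          rw [Finset.sum_coe_sort G (fun i => ‖f a i t‖ ^ 2)]
          exact hfb a t G
    _ ≤ ‖∑' a, b a‖ ^ 2 := by
        rw [hbt.tsum_eq]
        gcongr
        exact ContinuousMap.norm_coe_le_norm _ t

end HilbertModule

section WeightedRankOneSum

variable {T I α : Type*} [TopologicalSpace T] [CompactSpace T]

noncomputable def weightedRankOneSum (θ : α → C(T, ℂ)) (ξs ηs : α → I → C(T, ℂ))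
    (ζ : I → C(T, ℂ)) : I → C(T, ℂ) :=
  fun i => ∑' n, ξs n i * (hinner ζ (ηs n) * θ n)

theorem hnorm_weightedRankOneSum_sub_sum_le {θ : α → C(T, ℂ)} (hθ0 : ∀ n t, 0 ≤ θ n t)
    (hθ : Summable θ) {ξs ηs : α → I → C(T, ℂ)}
    (hξ : ∀ n, Summable fun i => star (ξs n i) * ξs n i) (hξ1 : ∀ n, hnorm (ξs n) ≤ 1)
    (hη : ∀ n, Summable fun i => star (ηs n i) * ηs n i) (hη1 : ∀ n, hnorm (ηs n) ≤ 1)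
    {ζ : I → C(T, ℂ)} (hζ : Summable fun i => star (ζ i) * ζ i) (hζ1 : hnorm ζ ≤ 1)
    (F : Finset α) :
    hnorm (fun i => weightedRankOneSum θ ξs ηs ζ i - ∑ n ∈ F, ξs n i * (hinner ζ (ηs n) * θ n))
      ≤ ‖∑' n : ↑((F : Set α)ᶜ), θ n‖ := by
  have hterm : ∀ n t (G : Finset I),
      ∑ i ∈ G, ‖(ξs n i * (hinner ζ (ηs n) * θ n)) t‖ ^ 2 ≤ ‖θ n t‖ ^ 2 := by
    intro n t G
    have hc : ‖hinner ζ (ηs n) t‖ ≤ 1 := (ContinuousMap.norm_coe_le_norm _ t).trans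
      ((norm_hinner_le hζ (hη n)).trans (mul_le_one₀ hζ1 (hnorm_nonneg _) (hη1 n)))
    calc ∑ i ∈ G, ‖(ξs n i * (hinner ζ (ηs n) * θ n)) t‖ ^ 2
        = (∑ i ∈ G, ‖ξs n i t‖ ^ 2) * (‖hinner ζ (ηs n) t‖ * ‖θ n t‖) ^ 2 := by
          simp only [ContinuousMap.mul_apply, norm_mul, mul_pow, Finset.sum_mul]
      _ ≤ 1 * (1 * ‖θ n t‖) ^ 2 := by
          gcongr
          exact (sum_norm_sq_apply_le_hnorm_sq (hξ n) G t).trans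
            (pow_le_one₀ (hnorm_nonneg _) (hξ1 n))
      _ = ‖θ n t‖ ^ 2 := by ring
  have htail : ∀ i, weightedRankOneSum θ ξs ηs ζ i - ∑ n ∈ F, ξs n i * (hinner ζ (ηs n) * θ n)
      = ∑' n : ↑((F : Set α)ᶜ), ξs n i * (hinner ζ (ηs n) * θ n) := fun i => by
    rw [weightedRankOneSum,
      ← (summable_apply_of_sum_norm_sq_apply_le hθ0 hθ hterm i).sum_add_tsum_compl,
      add_sub_cancel_left]
  simp only [htail]
  exact hnorm_tsum_le (fun (n : ↑((F : Set α)ᶜ)) => hθ0 n) (hθ.subtype _) fun n => hterm n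

variable [DecidableEq I]

lemma hinner_weightedRankOneSum_single {p : I → C(T, ℂ)} {i : I} (hp : IsSelfAdjoint (p i))
    {θ : α → C(T, ℂ)} {ξs ηs : α → I → C(T, ℂ)} (hξp : ∀ n, p i * ξs n i = ξs n i)
    (hηp : ∀ n, p i * ηs n i = ηs n i)
    (hs : Summable fun n => θ n * (star (ηs n i) * ξs n i)) :
    hinner (weightedRankOneSum θ ξs ηs (fun l => if l = i then p i else 0))
      (fun l => if l = i then p i else 0) = ∑' n, θ n * (star (ηs n i) * ξs n i) := by
  have hηp' : ∀ n, star (ηs n i) * p i = star (ηs n i) := fun n => by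
    rw [mul_comm]; simpa [hp.star_eq] using congrArg star (hηp n)
  have hterm : ∀ n, ξs n i * (hinner (fun l => if l = i then p i else 0) (ηs n) * θ n)
      = θ n * (star (ηs n i) * ξs n i) := fun n => by
    rw [hinner_single_left, hηp']; ring
  rw [hinner_single_right, weightedRankOneSum, hp.star_eq, tsum_congr hterm,
    ← hs.tsum_mul_left]
  exact tsum_congr fun n => by linear_combination (θ n * star (ηs n i)) * hξp n

theorem hasSum_hinner_weightedRankOneSum_single {p : I → C(T, ℂ)}
    (hp : ∀ i, IsSelfAdjoint (p i)) {θ : α → C(T, ℂ)} (hθ0 : ∀ n t, 0 ≤ θ n t)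
    (hθ : Summable θ) {ξs ηs : α → I → C(T, ℂ)}
    (hξ : ∀ n, MemH p (ξs n)) (hξ1 : ∀ n, hnorm (ξs n) ≤ 1)
    (hη : ∀ n, MemH p (ηs n)) (hη1 : ∀ n, hnorm (ηs n) ≤ 1) :
    ∃ S : C(T, ℂ), HasSum (fun n => θ n * hinner (ξs n) (ηs n)) S ∧
      HasSum (fun i => hinner (weightedRankOneSum θ ξs ηs (fun l => if l = i then p i else 0))
        (fun l => if l = i then p i else 0)) S := by
  have hinner_summable (n : α) : Summable fun i => star (ηs n i) * ξs n i :=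
    summable_star_mul (hξ n).2 (hη n).2
  have hg : Summable fun x : α × I => θ x.1 * (star (ηs x.1 x.2) * ξs x.1 x.2) :=
    summable_mul_prod (a := fun n i => star (ηs n i) * ξs n i) hθ0 hθ hinner_summable fun n G =>
    (norm_sum_star_mul_le (hξ n).2 (hη n).2 G).trans
      (mul_le_one₀ (hξ1 n) (hnorm_nonneg _) (hη1 n))
  refine ⟨_, hg.hasSum.prod_fiberwise fun n => (hinner_summable n).hasSum.mul_left (θ n), ?_⟩
  refine ((Equiv.prodComm I α).hasSum_iff.2 hg.hasSum).prod_fiberwise fun i => ?_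
  have hfiber : Summable fun n => θ n * (star (ηs n i) * ξs n i) := hg.prod_symm.prod_factor i
  rw [hinner_weightedRankOneSum_single (hp i) (fun n => (hξ n).1 i) (fun n => (hη n).1 i) hfiber]
  exact hfiber.hasSum

end WeightedRankOneSum

theorem stmt17_general {T I : Type*} [TopologicalSpace T] [CompactSpace T] [DecidableEq I]
    (p : I → C(T, ℂ)) (hp : ∀ i t, p i t = 0 ∨ p i t = 1)
    (θ : ℕ → C(T, ℂ)) (hθpos : ∀ n t, 0 ≤ θ n t) (hθ : Summable θ)
    (ξs ηs : ℕ → I → C(T, ℂ))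
    (hξ : ∀ n, MemH p (ξs n) ∧ hnorm (ξs n) ≤ 1)
    (hη : ∀ n, MemH p (ηs n) ∧ hnorm (ηs n) ≤ 1) :
    ∃ u : (I → C(T, ℂ)) → (I → C(T, ℂ)),
      -- (a) the finite partial sums converge to `u` uniformly on the unit ball of `H`
      (∀ ε : ℝ, 0 < ε → ∃ F₀ : Finset ℕ, ∀ F : Finset ℕ, F₀ ⊆ F →
        ∀ ζ, MemH p ζ → hnorm ζ ≤ 1 →
          hnorm (fun i => u ζ i - ∑ n ∈ F, ξs n i * (hinner ζ (ηs n) * θ n)) ≤ ε) ∧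
      -- (b) `∑ᵢ ⟨u eᵢ, eᵢ⟩ = ∑ₙ θₙ ⟨ξₙ, ηₙ⟩`, both families being summable in `E`
      ∃ S : C(T, ℂ),
        HasSum (fun n : ℕ => θ n * hinner (ξs n) (ηs n)) S ∧
        HasSum (fun i : I =>
          hinner (u (fun lam => if lam = i then p i else 0))
            (fun lam => if lam = i then p i else 0)) S := by
  refine ⟨weightedRankOneSum θ ξs ηs, fun ε hε => ?_,
    hasSum_hinner_weightedRankOneSum_single (fun i => isSelfAdjoint_of_forall_eq_zero_or_one (hp i))
      hθpos hθ (fun n => (hξ n).1) (fun n => (hξ n).2) (fun n => (hη n).1) (fun n => (hη n).2)⟩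
  obtain ⟨F₀, hF₀⟩ := hθ.tsum_vanishing (Metric.closedBall_mem_nhds 0 hε)
  refine ⟨F₀, fun F hF ζ hζ hζ1 => ?_⟩
  refine (hnorm_weightedRankOneSum_sub_sum_le hθpos hθ (fun n => (hξ n).1.2) (fun n => (hξ n).2)
    (fun n => (hη n).1.2) (fun n => (hη n).2) hζ.2 hζ1 F).trans ?_
  simpa using hF₀ _ (disjoint_compl_left.mono_right (Finset.coe_subset.2 hF))

/-- Let `(θₙ)` be a summable family of nonnegative elements of `E` and
`(ξₙ)`, `(ηₙ)` sequences in the closed unit ball of `H`. Then (a) the family of operators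
`(θₙ • (ξₙ⟨·,ηₙ⟩))ₙ`, `ζ ↦ ξₙ · (⟨ζ,ηₙ⟩ · θₙ)`, is summable in `K(H)` for the operator
norm, with sum `u`; and (b) with `e_i := (δ_{iλ} p_i)_λ ∈ H`, the family
`(⟨u e_i, e_i⟩)_{i∈I}` is summable in `E` with sum `∑ₙ θₙ ⟨ξₙ, ηₙ⟩`. -/
theorem stmt17 {T I : Type*} [TopologicalSpace T] [CompactSpace T] [T2Space T] [DecidableEq I]
    (p : I → C(T, ℂ)) (hp : ∀ i t, p i t = 0 ∨ p i t = 1)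
    (θ : ℕ → C(T, ℂ)) (hθpos : ∀ n t, 0 ≤ θ n t) (hθ : Summable θ)
    (ξs ηs : ℕ → I → C(T, ℂ))
    (hξ : ∀ n, MemH p (ξs n) ∧ hnorm (ξs n) ≤ 1)
    (hη : ∀ n, MemH p (ηs n) ∧ hnorm (ηs n) ≤ 1) :
    ∃ u : (I → C(T, ℂ)) → (I → C(T, ℂ)),
      -- (a) the finite partial sums converge to `u` uniformly on the unit ball of `H`
      (∀ ε : ℝ, 0 < ε → ∃ F₀ : Finset ℕ, ∀ F : Finset ℕ, F₀ ⊆ F →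
        ∀ ζ, MemH p ζ → hnorm ζ ≤ 1 →
          hnorm (fun i => u ζ i - ∑ n ∈ F, ξs n i * (hinner ζ (ηs n) * θ n)) ≤ ε) ∧
      -- (b) `∑ᵢ ⟨u eᵢ, eᵢ⟩ = ∑ₙ θₙ ⟨ξₙ, ηₙ⟩`, both families being summable in `E`
      ∃ S : C(T, ℂ),
        HasSum (fun n : ℕ => θ n * hinner (ξs n) (ηs n)) S ∧
        HasSum (fun i : I =>
          hinner (u (fun lam => if lam = i then p i else 0))
            (fun lam => if lam = i then p i else 0)) S :=
  stmt17_general p hp θ hθpos hθ ξs ηs hξ hη
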